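/- If T is a non-singular k×k label transition matrix with T_{ij} = Pr(ỹ = j | y = i), and ℓ(x, ·; w) ∈ ℝ^k is the loss vector, then the backward-corrected loss ℓ←(x, y; w) = (T^{-1} ℓ(x, ·; w))_y is unbiased: for every x, E_{ỹ|x}[ℓ←(x, ỹ; w)] = E_{y|x}[ℓ(x, y; w)]. -/
import Mathlib


/-- Backward correction is unbiased: if the noisy posterior is q = Tᵀ p and T is
invertible, then the expected backward-corrected loss under q equals the expected
loss under the clean posterior p. -/
theorem backward_correction_unbiased {k : ℕ} (T : Matrix (Fin k) (Fin k) ℝ)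
    (hT : IsUnit T.det) (p q ℓ : Fin k → ℝ)
    (hp_nonneg : ∀ i, 0 ≤ p i) (hp_sum : ∑ i, p i = 1)
    (hq : q = T.transpose.mulVec p) :
    ∑ j, q j * (T⁻¹.mulVec ℓ) j = ∑ i, p i * ℓ i := by
  subst hq
  have this : ∀ (a b : Fin k → ℝ), ∑ j, a j * b j = dotProduct a b := fun a b => rfl
  rw [this, this, Matrix.mulVec_transpose, ← Matrix.dotProduct_mulVec,
    Matrix.mulVec_mulVec, Matrix.mul_nonsing_inv T hT, Matrix.one_mulVec]
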